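/- arXiv:2603.14557 — 5 statements merged into one kernel-verified Lean document; each statement's English description precedes it below -/
import Mathlib

section
/- Let v : [1, ∞) → ℝ be concave with v(y) ≥ Hv(y) for all y, where H is the issuance operator with costs κ, κ' ∈ (0,1). Then the right derivative of v at 1 satisfies D⁺v(1) ≤ 1/(1-κ'), and consequently v(y) ≤ v(1) + (y-1)/(1-κ') for all y ≥ 1. -/
/-!
At `y = 1` the issuance inequality reads `v (1 + (1 - κ') ξ) ≤ v 1 + ξ` for every `ξ > 0`.
Substituting `ξ = (y - 1) / (1 - κ')` gives the linear bound on `[1, ∞)`, and letting `y ↓ 1`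
in the slopes `(v y - v 1) / (y - 1) ≤ 1 / (1 - κ')` bounds the right derivative.
-/

open Set Filter

theorem le_add_div_of_forall_pos_sub_le {v : ℝ → ℝ} {a c : ℝ} (hc : 0 < c)
    (h : ∀ ξ, 0 < ξ → v (a + c * ξ) - ξ ≤ v a) (y : ℝ) (hy : a ≤ y) :
    v y ≤ v a + (y - a) / c := by
  rcases hy.eq_or_lt with rfl | hlt
  · simp
  · have hξ := h ((y - a) / c) (div_pos (sub_pos.mpr hlt) hc)
    rw [mul_div_cancel₀ _ hc.ne', add_sub_cancel] at hξ
    linarith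

theorem HasDerivWithinAt.le_of_le_add_mul {f : ℝ → ℝ} {a d L : ℝ}
    (hd : HasDerivWithinAt f d (Ici a) a) (h : ∀ y, a < y → f y ≤ f a + L * (y - a)) :
    d ≤ L := by
  rw [hasDerivWithinAt_iff_tendsto_slope, Ici_sdiff_left] at hd
  refine le_of_tendsto hd ?_
  filter_upwards [self_mem_nhdsWithin] with y (hy : a < y)
  rw [slope_def_field, div_le_iff₀ (sub_pos.mpr hy)]
  linarith [h y hy]

theorem right_derivative_bound_at_one_general
    (κ κ' : ℝ) (hκ' : κ' ∈ Set.Ioo (0:ℝ) 1)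
    (v : ℝ → ℝ)
    (hHv : ∀ y, 1 ≤ y → ∀ ξ, κ / (1 - κ') * (y - 1) < ξ →
        v ((1 - κ) * y + (1 - κ') * ξ + κ) - ξ + κ * (y - 1) ≤ v y) :
    (∀ d, HasDerivWithinAt v d (Set.Ici 1) 1 → d ≤ 1 / (1 - κ')) ∧
      ∀ y, 1 ≤ y → v y ≤ v 1 + (y - 1) / (1 - κ') := by
  have hc : (0 : ℝ) < 1 - κ' := sub_pos.mpr hκ'.2
  have hlin : ∀ y, 1 ≤ y → v y ≤ v 1 + (y - 1) / (1 - κ') :=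
    le_add_div_of_forall_pos_sub_le hc fun ξ hξ => by
      have h := hHv 1 le_rfl ξ (by simpa using hξ)
      rwa [show (1 - κ) * 1 + (1 - κ') * ξ + κ = 1 + (1 - κ') * ξ by ring, sub_self, mul_zero,
        add_zero] at h
  refine ⟨fun d hd => hd.le_of_le_add_mul fun y hy => ?_, hlin⟩
  rw [one_div_mul_eq_div]
  exact hlin y hy.le

/-- If `v` is concave on `[1, ∞)` and dominates the issuance operator, i.e.
`v(y) ≥ v((1-κ)y + (1-κ')ξ + κ) - ξ + κ(y-1)` for every admissible `ξ`, then the right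
derivative of `v` at `1` is at most `1/(1-κ')`, and consequently
`v(y) ≤ v(1) + (y-1)/(1-κ')` for all `y ≥ 1`. -/
theorem right_derivative_bound_at_one
    (κ κ' : ℝ) (hκ : κ ∈ Set.Ioo (0:ℝ) 1) (hκ' : κ' ∈ Set.Ioo (0:ℝ) 1)
    (v : ℝ → ℝ) (hconc : ConcaveOn ℝ (Set.Ici 1) v)
    (hHv : ∀ y, 1 ≤ y → ∀ ξ, κ / (1 - κ') * (y - 1) < ξ →
        v ((1 - κ) * y + (1 - κ') * ξ + κ) - ξ + κ * (y - 1) ≤ v y) :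
    (∀ d, HasDerivWithinAt v d (Set.Ici 1) 1 → d ≤ 1 / (1 - κ')) ∧
      ∀ y, 1 ≤ y → v y ≤ v 1 + (y - 1) / (1 - κ') :=
  right_derivative_bound_at_one_general κ κ' hκ' v hHv
end

section
/- Let v : [1, ∞) → ℝ be concave, κ, κ' ∈ (0,1), and suppose y > 1 satisfies 1 < D⁺v(y) ≤ 1/(1-κ'). Then for every ξ > (κ/(1-κ'))(y-1), v((1-κ)y + (1-κ')ξ + κ) - ξ + κ(y-1) ≤ v(y) - (κκ'/(1-κ'))(y-1) < v(y). In particular, Hv(y) < v(y), so y is not in the issuance region. -/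
/-!
Write `t = κ/(1-κ')·(y-1)` for the admissibility threshold, so that `(1-κ')t = κ(y-1)` and the
post-issuance state is `z = y + (1-κ')(ξ - t) ≥ y`. The supergradient bound at `y` then turns the
payoff into at most `v(y) + ((1-κ')d - 1)(ξ - t) - κ't`, and the middle term is `≤ 0` because
`d ≤ 1/(1-κ')` and `ξ > t`.
-/

section Issuance

variable {κ κ' y ξ : ℝ}

lemma one_sub_mul_issuance_threshold (hκ' : κ' < 1) :
    (1 - κ') * (κ / (1 - κ') * (y - 1)) = κ * (y - 1) := by
  rw [← mul_assoc, mul_div_cancel₀ κ (sub_ne_zero.mpr hκ'.ne')]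

lemma issuance_state_sub_self (hκ' : κ' < 1) :
    (1 - κ) * y + (1 - κ') * ξ + κ - y = (1 - κ') * (ξ - κ / (1 - κ') * (y - 1)) := by
  rw [mul_sub, one_sub_mul_issuance_threshold hκ']
  ring

lemma le_issuance_state (hκ' : κ' < 1) (hξ : κ / (1 - κ') * (y - 1) < ξ) :
    y ≤ (1 - κ) * y + (1 - κ') * ξ + κ := by
  rw [← sub_nonneg, issuance_state_sub_self hκ']
  exact mul_nonneg (sub_nonneg.mpr hκ'.le) (sub_nonneg.mpr hξ.le)

lemma issuance_payoff_le_of_supergradient {v : ℝ → ℝ} {d : ℝ} (hκ' : κ' < 1)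
    (hd : (1 - κ') * d ≤ 1) (hsupergrad : ∀ z, y ≤ z → v z ≤ v y + (z - y) * d)
    (hξ : κ / (1 - κ') * (y - 1) < ξ) :
    v ((1 - κ) * y + (1 - κ') * ξ + κ) - ξ + κ * (y - 1)
      ≤ v y - κ * κ' / (1 - κ') * (y - 1) := by
  have hsup := hsupergrad _ (le_issuance_state hκ' hξ)
  rw [issuance_state_sub_self hκ'] at hsup
  have hthreshold := one_sub_mul_issuance_threshold (κ := κ) (y := y) hκ'
  have hnonpos : ((1 - κ') * d - 1) * (ξ - κ / (1 - κ') * (y - 1)) ≤ 0 :=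
    mul_nonpos_of_nonpos_of_nonneg (sub_nonpos.mpr hd) (sub_nonneg.mpr hξ.le)
  calc v ((1 - κ) * y + (1 - κ') * ξ + κ) - ξ + κ * (y - 1)
      ≤ v y + ((1 - κ') * d - 1) * (ξ - κ / (1 - κ') * (y - 1))
          - κ' * (κ / (1 - κ') * (y - 1)) := by linear_combination hsup - hthreshold
    _ ≤ v y - κ * κ' / (1 - κ') * (y - 1) := by linear_combination hnonpos

end Issuance

theorem no_issuance_when_slope_moderate_general
    (κ κ' : ℝ) (hκ : κ ∈ Set.Ioo (0:ℝ) 1) (hκ' : κ' ∈ Set.Ioo (0:ℝ) 1)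
    (v : ℝ → ℝ)
    (y d : ℝ) (hy : 1 < y)
    (hsupergrad : ∀ z, y ≤ z → v z ≤ v y + (z - y) * d)
    (hd2 : d ≤ 1 / (1 - κ')) :
    ∀ ξ, κ / (1 - κ') * (y - 1) < ξ →
      v ((1 - κ) * y + (1 - κ') * ξ + κ) - ξ + κ * (y - 1)
          ≤ v y - κ * κ' / (1 - κ') * (y - 1) ∧
        v y - κ * κ' / (1 - κ') * (y - 1) < v y := by
  intro ξ hξ
  have hslack : 0 < 1 - κ' := sub_pos.mpr hκ'.2
  have hd : (1 - κ') * d ≤ 1 := by rwa [le_div_iff₀' hslack] at hd2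
  refine ⟨issuance_payoff_le_of_supergradient hκ'.2 hd hsupergrad hξ, sub_lt_self _ ?_⟩
  exact mul_pos (div_pos (mul_pos hκ.1 hκ'.1) hslack) (sub_pos.mpr hy)

/-- If `v` is concave on `[1, ∞)`, `y > 1`, and the right derivative `d = D⁺v(y)` (a
supergradient to the right: `v(z) ≤ v(y) + (z-y)d` for `z ≥ y`) satisfies
`1 < d ≤ 1/(1-κ')`, then for every admissible issuance `ξ > (κ/(1-κ'))(y-1)`,
`v((1-κ)y + (1-κ')ξ + κ) - ξ + κ(y-1) ≤ v(y) - (κκ'/(1-κ'))(y-1) < v(y)`;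
in particular `y` is not in the issuance region. -/
theorem no_issuance_when_slope_moderate
    (κ κ' : ℝ) (hκ : κ ∈ Set.Ioo (0:ℝ) 1) (hκ' : κ' ∈ Set.Ioo (0:ℝ) 1)
    (v : ℝ → ℝ) (hconc : ConcaveOn ℝ (Set.Ici 1) v)
    (y d : ℝ) (hy : 1 < y)
    (hsupergrad : ∀ z, y ≤ z → v z ≤ v y + (z - y) * d)
    (hd1 : 1 < d) (hd2 : d ≤ 1 / (1 - κ')) :
    ∀ ξ, κ / (1 - κ') * (y - 1) < ξ →
      v ((1 - κ) * y + (1 - κ') * ξ + κ) - ξ + κ * (y - 1)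
          ≤ v y - κ * κ' / (1 - κ') * (y - 1) ∧
        v y - κ * κ' / (1 - κ') * (y - 1) < v y :=
  no_issuance_when_slope_moderate_general κ κ' hκ hκ' v y d hy hsupergrad hd2
end

section
/- Let v : [1, ∞) → ℝ be concave with right derivative D⁺v(y) = 1 at some y > 1 (so v(z) ≤ v(y) + (z - y) for z ≥ y). Then with κ, κ' ∈ (0,1), Hv(y) ≤ v(y) - (κκ'/(1-κ'))(y-1) < v(y). Hence the issuance region and the dividend region are disjoint. -/
/-! In the dividend region `v` grows at most with slope `1` to the right of `y`. Every admissible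
issuance `ξ` moves the state to `z ≥ y` with `z - y = (1 - κ')ξ - κ(y - 1)`, so its payoff
`v z - ξ + κ(y - 1)` is at most `v y - κ'ξ`, and `ξ > κ(y - 1)/(1 - κ')` bounds this by
`v y - κκ'(y - 1)/(1 - κ')`. -/

theorem issuance_payoff_le_of_slope_le_one {κ κ' y ξ : ℝ} {v : ℝ → ℝ}
    (hslope : ∀ z, y ≤ z → v z ≤ v y + (z - y)) (hξ : κ * (y - 1) ≤ (1 - κ') * ξ) :
    v ((1 - κ) * y + (1 - κ') * ξ + κ) - ξ + κ * (y - 1) ≤ v y - κ' * ξ := by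
  have := hslope ((1 - κ) * y + (1 - κ') * ξ + κ) (by linarith)
  linarith

theorem issuance_dividend_disjoint_general
    (κ κ' : ℝ) (hκ : κ ∈ Set.Ioo (0:ℝ) 1) (hκ' : κ' ∈ Set.Ioo (0:ℝ) 1)
    (v : ℝ → ℝ)
    (y : ℝ) (hy : 1 < y)
    (hslope : ∀ z, y ≤ z → v z ≤ v y + (z - y))
    (Hv : ℝ → ℝ)
    (hH : ∀ w, Hv w = sSup {z | ∃ ξ, κ / (1 - κ') * (w - 1) < ξ ∧
        z = v ((1 - κ) * w + (1 - κ') * ξ + κ) - ξ + κ * (w - 1)}) :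
    Hv y ≤ v y - κ * κ' / (1 - κ') * (y - 1) ∧
      v y - κ * κ' / (1 - κ') * (y - 1) < v y := by
  obtain ⟨hκ0, -⟩ := hκ
  obtain ⟨hκ'0, hκ'1⟩ := hκ'
  have h1κ' : 0 < 1 - κ' := by linarith
  refine ⟨?_, sub_lt_self _ (by have := sub_pos.2 hy; positivity)⟩
  rw [hH y]
  refine csSup_le ⟨_, κ / (1 - κ') * (y - 1) + 1, by linarith, rfl⟩ ?_
  rintro _ ⟨ξ, hξ, rfl⟩
  have hξ' : κ * (y - 1) ≤ (1 - κ') * ξ := by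
    rw [div_mul_eq_mul_div, div_lt_iff₀' h1κ'] at hξ
    exact hξ.le
  calc _ ≤ v y - κ' * ξ := issuance_payoff_le_of_slope_le_one hslope hξ'
    _ ≤ v y - κ' * (κ / (1 - κ') * (y - 1)) := by gcongr
    _ = v y - κ * κ' / (1 - κ') * (y - 1) := by ring

/-- If `v` is concave on `[1, ∞)` and has right slope `1` at some `y > 1` (so
`v(z) ≤ v(y) + (z - y)` for `z ≥ y`, as in the dividend region), then
`Hv(y) ≤ v(y) - (κκ'/(1-κ'))(y-1) < v(y)`: issuance and dividend regions are disjoint. -/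
theorem issuance_dividend_disjoint
    (κ κ' : ℝ) (hκ : κ ∈ Set.Ioo (0:ℝ) 1) (hκ' : κ' ∈ Set.Ioo (0:ℝ) 1)
    (v : ℝ → ℝ) (hconc : ConcaveOn ℝ (Set.Ici 1) v)
    (y : ℝ) (hy : 1 < y)
    (hslope : ∀ z, y ≤ z → v z ≤ v y + (z - y))
    (Hv : ℝ → ℝ)
    (hH : ∀ w, Hv w = sSup {z | ∃ ξ, κ / (1 - κ') * (w - 1) < ξ ∧
        z = v ((1 - κ) * w + (1 - κ') * ξ + κ) - ξ + κ * (w - 1)}) :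
    Hv y ≤ v y - κ * κ' / (1 - κ') * (y - 1) ∧
      v y - κ * κ' / (1 - κ') * (y - 1) < v y :=
  issuance_dividend_disjoint_general κ κ' hκ hκ' v y hy hslope Hv hH
end

section
/- Suppose v : [1, ∞) → ℝ is concave, nondecreasing, and satisfies v'(y) ≥ 1 wherever differentiable, and suppose ρ > r + (μ-r)⁺/a₁ and ρ > r + (μ-r)⁺/a₃. Define ψ(y) = ρ_L·v(y) + (μ_L - μ*(y))·y - γ where ρ_L = ρ - μ_L and μ*(y) = r + π̄(y)(μ-r)⁺. Then on each of the two regimes of π̄, ψ is nondecreasing (indeed its derivative is bounded below by ρ - r - (μ-r)⁺/a₁ ≥ 0 or ρ - r - (μ-r)⁺/a₃ ≥ 0 respectively). -/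
/-!
A concave function whose derivative is `≥ 1` wherever it exists has every chord slope `≥ 1`:
a chord slope dominates the derivative at any point further right, and a monotone `v` is
differentiable almost everywhere. On a regime `y π̄(y)` is affine with slope `1 / a`
(`a = a₁` or `a₃`), hence `ψ(y) - ψ(x) ≥ (ρ - r - (μ-r)⁺ / a) (y - x) ≥ 0` for `x ≤ y`.
-/

open Set MeasureTheory

theorem MonotoneOn.exists_differentiableAt_gt {f : ℝ → ℝ} {y : ℝ} (hf : MonotoneOn f (Ioi y)) :
    ∃ z, y < z ∧ DifferentiableAt ℝ f z := by
  obtain ⟨z, hz, hdiff⟩ := Measure.exists_mem_of_measure_ne_zero_of_ae (by simp)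
    (hf.ae_differentiableWithinAt measurableSet_Ioi)
  exact ⟨z, hz, hdiff.differentiableAt (Ioi_mem_nhds hz)⟩

theorem ConcaveOn.le_slope_of_hasDerivAt_of_lt {f : ℝ → ℝ} {S : Set ℝ} {x y z d : ℝ}
    (hf : ConcaveOn ℝ S f) (hx : x ∈ S) (hy : y ∈ S) (hz : z ∈ S) (hxy : x < y) (hyz : y < z)
    (hd : HasDerivAt f d z) : d ≤ slope f x y := by
  calc d ≤ slope f y z := hf.le_slope_of_hasDerivAt hy hz hyz hd
    _ ≤ slope f x y := by
      simpa only [slope_def_field] using hf.slope_anti_adjacent hx hz hxy hyz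

theorem ConcaveOn.mul_sub_le_sub_of_le_hasDerivAt {v : ℝ → ℝ} {a c x y : ℝ}
    (hconc : ConcaveOn ℝ (Ici a) v) (hmono : MonotoneOn v (Ici a))
    (hder : ∀ z, a < z → ∀ d, HasDerivAt v d z → c ≤ d) (hx : a ≤ x) (hxy : x ≤ y) :
    c * (y - x) ≤ v y - v x := by
  rcases hxy.eq_or_lt with rfl | hxy
  · simp
  have hy : a ≤ y := hx.trans hxy.le
  obtain ⟨z, hyz, hdiff⟩ := (hmono.mono (Ioi_subset_Ici hy)).exists_differentiableAt_gt
  have hslope : c ≤ slope v x y :=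
    (hder z (hy.trans_lt hyz) _ hdiff.hasDerivAt).trans <|
      hconc.le_slope_of_hasDerivAt_of_lt hx hy (hy.trans hyz.le) hxy hyz hdiff.hasDerivAt
  rwa [slope_def_field, le_div_iff₀ (sub_pos.mpr hxy)] at hslope

section Regime

variable {ρ μL r M γ b c x y : ℝ} {p v : ℝ → ℝ}

theorem sub_le_psi_sub_of_regime (hρL : 0 ≤ ρ - μL) (hv : y - x ≤ v y - v x)
    (hx : x * p x = (x - c) / b) (hy : y * p y = (y - c) / b) :
    (ρ - r - M / b) * (y - x) ≤
      ((ρ - μL) * v y + (μL - (r + p y * M)) * y - γ) -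
        ((ρ - μL) * v x + (μL - (r + p x * M)) * x - γ) := by
  have hlin (t : ℝ) : (μL - (r + p t * M)) * t = (μL - r) * t - M * (t * p t) := by ring
  rw [hlin, hlin, hx, hy]
  linear_combination mul_le_mul_of_nonneg_left hv hρL

theorem monotoneOn_psi_of_regime {a : ℝ} {ψ : ℝ → ℝ}
    (hψ : ∀ y, ψ y = (ρ - μL) * v y + (μL - (r + p y * M)) * y - γ)
    (hρL : 0 ≤ ρ - μL) (hρb : r + M / b ≤ ρ)
    (hv : ∀ x y, a ≤ x → x ≤ y → y - x ≤ v y - v x) :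
    MonotoneOn ψ {y | a ≤ y ∧ y * p y = (y - c) / b} := by
  rintro x ⟨hax, hx⟩ y ⟨-, hy⟩ hxy
  have hslope := sub_le_psi_sub_of_regime (r := r) (M := M) (γ := γ) hρL (hv x y hax hxy) hx hy
  rw [← sub_nonneg, hψ, hψ]
  exact (mul_nonneg (by linarith) (sub_nonneg.mpr hxy)).trans hslope

end Regime

theorem psi_monotone_on_regimes_general
    (a₁ a₂ a₃ r μ ρ μL γ : ℝ)
    (hρL : 0 < ρ - μL)
    (hρ1 : r + max (μ - r) 0 / a₁ < ρ) (hρ3 : r + max (μ - r) 0 / a₃ < ρ)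
    (pibar : ℝ → ℝ)
    (v : ℝ → ℝ) (hconc : ConcaveOn ℝ (Set.Ici 1) v) (hmono : MonotoneOn v (Set.Ici 1))
    (hder : ∀ y, 1 ≤ y → ∀ d, HasDerivAt v d y → 1 ≤ d)
    (ψ : ℝ → ℝ)
    (hψ : ∀ y, ψ y = (ρ - μL) * v y + (μL - (r + pibar y * max (μ - r) 0)) * y - γ) :
    MonotoneOn ψ {y | 1 ≤ y ∧ y * pibar y = (y - 1) / a₁} ∧
      MonotoneOn ψ {y | 1 ≤ y ∧ y * pibar y = (y - a₂) / a₃} := by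
  have hv (x y : ℝ) (hx : 1 ≤ x) (hxy : x ≤ y) : y - x ≤ v y - v x := by
    simpa using hconc.mul_sub_le_sub_of_le_hasDerivAt hmono (fun z hz ↦ hder z hz.le) hx hxy
  exact ⟨monotoneOn_psi_of_regime hψ hρL.le hρ1.le hv,
    monotoneOn_psi_of_regime hψ hρL.le hρ3.le hv⟩

/-- Monotonicity of `ψ(y) = ρ_L v(y) + (μ_L - μ*(y))y - γ` on each regime of the
investment cap. If `v` is concave, nondecreasing, with derivative `≥ 1` wherever
differentiable, and `ρ > r + (μ-r)⁺/a₁`, `ρ > r + (μ-r)⁺/a₃`, then `ψ` is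
nondecreasing on the solvency regime `{y ≥ 1 : y π̄(y) = (y-1)/a₁}` and on the
liquidity regime `{y ≥ 1 : y π̄(y) = (y-a₂)/a₃}`. -/
theorem psi_monotone_on_regimes
    (a₁ a₂ a₃ r μ ρ μL γ : ℝ)
    (ha₁ : a₁ ∈ Set.Ioo (0:ℝ) 1) (ha₂ : a₂ ∈ Set.Ioo (0:ℝ) 1) (ha₃ : a₃ ∈ Set.Ioo (0:ℝ) 1)
    (hρL : 0 < ρ - μL)
    (hρ1 : r + max (μ - r) 0 / a₁ < ρ) (hρ3 : r + max (μ - r) 0 / a₃ < ρ)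
    (pibar : ℝ → ℝ)
    (hpibar : ∀ y, pibar y = min ((1/a₁) * (1 - 1/y)) ((1/a₃) * (1 - a₂/y)))
    (v : ℝ → ℝ) (hconc : ConcaveOn ℝ (Set.Ici 1) v) (hmono : MonotoneOn v (Set.Ici 1))
    (hder : ∀ y, 1 ≤ y → ∀ d, HasDerivAt v d y → 1 ≤ d)
    (ψ : ℝ → ℝ)
    (hψ : ∀ y, ψ y = (ρ - μL) * v y + (μL - (r + pibar y * max (μ - r) 0)) * y - γ) :
    MonotoneOn ψ {y | 1 ≤ y ∧ y * pibar y = (y - 1) / a₁} ∧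
      MonotoneOn ψ {y | 1 ≤ y ∧ y * pibar y = (y - a₂) / a₃} :=
  psi_monotone_on_regimes_general a₁ a₂ a₃ r μ ρ μL γ hρL hρ1 hρ3 pibar v hconc hmono hder ψ hψ
end

section
/- Let (y₁, Z¹, U¹) and (y₂, Z², U²) be two admissible state-control trajectories of the affine controlled dynamics dY_t = ((r-μ_L)Y_t + (μ-r)U_t + γ)dt + σU_t dB_t + σ_L(1-Y_t)dW_t - dZ_t subject to 0 ≤ U_t ≤ ū(Y_t) with ū concave, and let λ ∈ [0,1]. Then Y^λ := λY¹ + (1-λ)Y², with control (λZ¹ + (1-λ)Z², λU¹ + (1-λ)U²) and initial point λy₁ + (1-λ)y₂, solves the same dynamics and satisfies the constraint 0 ≤ U^λ_t ≤ ū(Y^λ_t). -/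
/-!
The drift and both diffusion coefficients are affine in the state and the control, and the
stochastic integrals act linearly on their integrands, so the integral equation is preserved
under convex combinations of solutions driven by the same noise. Admissibility is preserved
because the constraint is a concave upper bound: `θ U₁ + (1 - θ) U₂ ≤ θ ū(Y₁) + (1 - θ) ū(Y₂)
≤ ū(θ Y₁ + (1 - θ) Y₂)`.
-/

open MeasureTheory

lemma LinearMap.apply_const_mul_add_const_mul {α β : Type*} (L : (α → ℝ) →ₗ[ℝ] (β → ℝ))
    (c₁ c₂ : ℝ) (f g : α → ℝ) (t : β) :
    L (fun s => c₁ * f s + c₂ * g s) t = c₁ * L f t + c₂ * L g t := by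
  change L (c₁ • f + c₂ • g) t = _
  simp only [map_add, map_smul, Pi.add_apply, Pi.smul_apply, smul_eq_mul]

lemma intervalIntegral.integral_const_mul_add_const_mul {f g : ℝ → ℝ} {a b : ℝ} (c₁ c₂ : ℝ)
    (hf : IntervalIntegrable f volume a b) (hg : IntervalIntegrable g volume a b) :
    ∫ x in a..b, (c₁ * f x + c₂ * g x) = c₁ * (∫ x in a..b, f x) + c₂ * ∫ x in a..b, g x := by
  rw [integral_add (hf.const_mul c₁) (hg.const_mul c₂), integral_const_mul, integral_const_mul]

lemma ConcaveOn.convexComb_mem_Icc_zero {s : Set ℝ} {ubar : ℝ → ℝ} (hconc : ConcaveOn ℝ s ubar)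
    {θ y₁ y₂ u₁ u₂ : ℝ} (hθ : θ ∈ Set.Icc (0 : ℝ) 1) (hy₁ : y₁ ∈ s) (hy₂ : y₂ ∈ s)
    (hu₁ : u₁ ∈ Set.Icc 0 (ubar y₁)) (hu₂ : u₂ ∈ Set.Icc 0 (ubar y₂)) :
    θ * u₁ + (1 - θ) * u₂ ∈ Set.Icc 0 (ubar (θ * y₁ + (1 - θ) * y₂)) := by
  obtain ⟨hθ₀, hθ₁⟩ := hθ
  have hθ' : 0 ≤ 1 - θ := sub_nonneg.mpr hθ₁
  refine ⟨add_nonneg (mul_nonneg hθ₀ hu₁.1) (mul_nonneg hθ' hu₂.1), ?_⟩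
  calc θ * u₁ + (1 - θ) * u₂ ≤ θ * ubar y₁ + (1 - θ) * ubar y₂ := by
        gcongr
        exacts [hu₁.2, hu₂.2]
    _ ≤ ubar (θ * y₁ + (1 - θ) * y₂) := hconc.2 hy₁ hy₂ hθ₀ hθ' (by ring)

lemma integral_equation_convexComb {b c d : ℝ → ℝ → ℝ} {θ : ℝ}
    (hb : ∀ y₁ y₂ u₁ u₂, b (θ * y₁ + (1 - θ) * y₂) (θ * u₁ + (1 - θ) * u₂)
      = θ * b y₁ u₁ + (1 - θ) * b y₂ u₂)
    (hc : ∀ y₁ y₂ u₁ u₂, c (θ * y₁ + (1 - θ) * y₂) (θ * u₁ + (1 - θ) * u₂)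
      = θ * c y₁ u₁ + (1 - θ) * c y₂ u₂)
    (hd : ∀ y₁ y₂ u₁ u₂, d (θ * y₁ + (1 - θ) * y₂) (θ * u₁ + (1 - θ) * u₂)
      = θ * d y₁ u₁ + (1 - θ) * d y₂ u₂)
    (IB IW : (ℝ → ℝ) →ₗ[ℝ] (ℝ → ℝ)) {Y₁ Y₂ U₁ U₂ Z₁ Z₂ : ℝ → ℝ} {y₁ y₂ t : ℝ}
    (hint₁ : IntervalIntegrable (fun s => b (Y₁ s) (U₁ s)) volume 0 t)
    (hint₂ : IntervalIntegrable (fun s => b (Y₂ s) (U₂ s)) volume 0 t)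
    (hdyn₁ : Y₁ t = y₁ + (∫ s in (0:ℝ)..t, b (Y₁ s) (U₁ s))
      + IB (fun s => c (Y₁ s) (U₁ s)) t + IW (fun s => d (Y₁ s) (U₁ s)) t - Z₁ t)
    (hdyn₂ : Y₂ t = y₂ + (∫ s in (0:ℝ)..t, b (Y₂ s) (U₂ s))
      + IB (fun s => c (Y₂ s) (U₂ s)) t + IW (fun s => d (Y₂ s) (U₂ s)) t - Z₂ t) :
    θ * Y₁ t + (1 - θ) * Y₂ t
      = (θ * y₁ + (1 - θ) * y₂)
        + (∫ s in (0:ℝ)..t, b (θ * Y₁ s + (1 - θ) * Y₂ s) (θ * U₁ s + (1 - θ) * U₂ s))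
        + IB (fun s => c (θ * Y₁ s + (1 - θ) * Y₂ s) (θ * U₁ s + (1 - θ) * U₂ s)) t
        + IW (fun s => d (θ * Y₁ s + (1 - θ) * Y₂ s) (θ * U₁ s + (1 - θ) * U₂ s)) t
        - (θ * Z₁ t + (1 - θ) * Z₂ t) := by
  have hdrift : (∫ s in (0:ℝ)..t, b (θ * Y₁ s + (1 - θ) * Y₂ s) (θ * U₁ s + (1 - θ) * U₂ s))
      = θ * (∫ s in (0:ℝ)..t, b (Y₁ s) (U₁ s)) + (1 - θ) * ∫ s in (0:ℝ)..t, b (Y₂ s) (U₂ s) := by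
    simp only [hb]
    exact intervalIntegral.integral_const_mul_add_const_mul θ (1 - θ) hint₁ hint₂
  simp only [hc, hd, LinearMap.apply_const_mul_add_const_mul]
  rw [hdrift, hdyn₁, hdyn₂]
  ring

theorem convex_combination_admissible_general
    (r μL μ γ σ σL : ℝ)
    (ubar : ℝ → ℝ)
    (hconc : ConcaveOn ℝ (Set.Ici 1) ubar)
    (IB IW : (ℝ → ℝ) →ₗ[ℝ] (ℝ → ℝ))
    (Y₁ Y₂ U₁ U₂ Z₁ Z₂ : ℝ → ℝ) (y₁ y₂ θ : ℝ) (hθ : θ ∈ Set.Icc (0:ℝ) 1)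
    (hstate₁ : ∀ t, 1 ≤ Y₁ t) (hstate₂ : ∀ t, 1 ≤ Y₂ t)
    (hint₁ : ∀ t, IntervalIntegrable (fun s => (r - μL) * Y₁ s + (μ - r) * U₁ s + γ)
      MeasureTheory.volume 0 t)
    (hint₂ : ∀ t, IntervalIntegrable (fun s => (r - μL) * Y₂ s + (μ - r) * U₂ s + γ)
      MeasureTheory.volume 0 t)
    (hdyn₁ : ∀ t, Y₁ t = y₁ + (∫ s in (0:ℝ)..t, ((r - μL) * Y₁ s + (μ - r) * U₁ s + γ))
        + IB (fun s => σ * U₁ s) t + IW (fun s => σL * (1 - Y₁ s)) t - Z₁ t)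
    (hdyn₂ : ∀ t, Y₂ t = y₂ + (∫ s in (0:ℝ)..t, ((r - μL) * Y₂ s + (μ - r) * U₂ s + γ))
        + IB (fun s => σ * U₂ s) t + IW (fun s => σL * (1 - Y₂ s)) t - Z₂ t)
    (hcon₁ : ∀ t, 0 ≤ U₁ t ∧ U₁ t ≤ ubar (Y₁ t))
    (hcon₂ : ∀ t, 0 ≤ U₂ t ∧ U₂ t ≤ ubar (Y₂ t)) :
    (∀ t, θ * Y₁ t + (1 - θ) * Y₂ t
        = (θ * y₁ + (1 - θ) * y₂)
          + (∫ s in (0:ℝ)..t, ((r - μL) * (θ * Y₁ s + (1 - θ) * Y₂ s)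
              + (μ - r) * (θ * U₁ s + (1 - θ) * U₂ s) + γ))
          + IB (fun s => σ * (θ * U₁ s + (1 - θ) * U₂ s)) t
          + IW (fun s => σL * (1 - (θ * Y₁ s + (1 - θ) * Y₂ s))) t
          - (θ * Z₁ t + (1 - θ) * Z₂ t)) ∧
      ∀ t, 0 ≤ θ * U₁ t + (1 - θ) * U₂ t ∧
        θ * U₁ t + (1 - θ) * U₂ t ≤ ubar (θ * Y₁ t + (1 - θ) * Y₂ t) := by
  refine ⟨fun t => ?_, fun t => ?_⟩
  · exact integral_equation_convexComb (b := fun y u => (r - μL) * y + (μ - r) * u + γ)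
      (c := fun _ u => σ * u) (d := fun y _ => σL * (1 - y))
      (fun _ _ _ _ => by ring) (fun _ _ _ _ => by ring) (fun _ _ _ _ => by ring)
      IB IW (hint₁ t) (hint₂ t) (hdyn₁ t) (hdyn₂ t)
  · exact hconc.convexComb_mem_Icc_zero hθ (hstate₁ t) (hstate₂ t) (hcon₁ t) (hcon₂ t)

/-- Convexity lemma for the controlled dynamics: the drift and diffusion
coefficients are affine in `(Y, U)`, so a convex combination of two admissible
state-control trajectories (with the same driving noise, modeled by linear
integration operators `IB`, `IW`) solves the same dynamics; and since the
constraint function `ū` is concave, the combined control remains admissible. -/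
theorem convex_combination_admissible
    (a₁ a₂ a₃ r μL μ γ σ σL : ℝ)
    (ubar : ℝ → ℝ) (hubar : ∀ y, ubar y = min ((y - 1) / a₁) ((y - a₂) / a₃))
    (hconc : ConcaveOn ℝ (Set.Ici 1) ubar)
    (IB IW : (ℝ → ℝ) →ₗ[ℝ] (ℝ → ℝ))
    (Y₁ Y₂ U₁ U₂ Z₁ Z₂ : ℝ → ℝ) (y₁ y₂ θ : ℝ) (hθ : θ ∈ Set.Icc (0:ℝ) 1)
    (hstate₁ : ∀ t, 1 ≤ Y₁ t) (hstate₂ : ∀ t, 1 ≤ Y₂ t)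
    (hint₁ : ∀ t, IntervalIntegrable (fun s => (r - μL) * Y₁ s + (μ - r) * U₁ s + γ)
      MeasureTheory.volume 0 t)
    (hint₂ : ∀ t, IntervalIntegrable (fun s => (r - μL) * Y₂ s + (μ - r) * U₂ s + γ)
      MeasureTheory.volume 0 t)
    (hdyn₁ : ∀ t, Y₁ t = y₁ + (∫ s in (0:ℝ)..t, ((r - μL) * Y₁ s + (μ - r) * U₁ s + γ))
        + IB (fun s => σ * U₁ s) t + IW (fun s => σL * (1 - Y₁ s)) t - Z₁ t)
    (hdyn₂ : ∀ t, Y₂ t = y₂ + (∫ s in (0:ℝ)..t, ((r - μL) * Y₂ s + (μ - r) * U₂ s + γ))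
        + IB (fun s => σ * U₂ s) t + IW (fun s => σL * (1 - Y₂ s)) t - Z₂ t)
    (hcon₁ : ∀ t, 0 ≤ U₁ t ∧ U₁ t ≤ ubar (Y₁ t))
    (hcon₂ : ∀ t, 0 ≤ U₂ t ∧ U₂ t ≤ ubar (Y₂ t)) :
    (∀ t, θ * Y₁ t + (1 - θ) * Y₂ t
        = (θ * y₁ + (1 - θ) * y₂)
          + (∫ s in (0:ℝ)..t, ((r - μL) * (θ * Y₁ s + (1 - θ) * Y₂ s)
              + (μ - r) * (θ * U₁ s + (1 - θ) * U₂ s) + γ))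
          + IB (fun s => σ * (θ * U₁ s + (1 - θ) * U₂ s)) t
          + IW (fun s => σL * (1 - (θ * Y₁ s + (1 - θ) * Y₂ s))) t
          - (θ * Z₁ t + (1 - θ) * Z₂ t)) ∧
      ∀ t, 0 ≤ θ * U₁ t + (1 - θ) * U₂ t ∧
        θ * U₁ t + (1 - θ) * U₂ t ≤ ubar (θ * Y₁ t + (1 - θ) * Y₂ t) :=
  convex_combination_admissible_general r μL μ γ σ σL ubar hconc IB IW Y₁ Y₂ U₁ U₂ Z₁ Z₂ y₁ y₂ θ hθ
    hstate₁ hstate₂ hint₁ hint₂ hdyn₁ hdyn₂ hcon₁ hcon₂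
end
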